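/- arXiv:2402.12141 — 3 statements merged into one kernel-verified Lean document; each statement's English description precedes it below -/
import Mathlib

section
/- (Projection slice theorem) For f : ℝ² → ℝ integrable with compact support, the 1-dimensional Fourier transform of s ↦ P(f)(θ, s) evaluated at frequency σ equals the 2-dimensional Fourier transform of f evaluated at σ·(cos θ, sin θ). -/
open MeasureTheory Real Complex

/-
Rotating coordinates by `θ` turns the line integrals `P(f)(θ, s)` into integrals of `f ∘ R_θ` over
the second coordinate, so by Fubini the 1D transform is the integral of `f ∘ R_θ` against
`e^{-2πiσ p₁}`. Since `p₁ = ⟨R_θ p, (cos θ, sin θ)⟩` and `R_θ` preserves Lebesgue measure, changing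
variables gives `f̂(σ (cos θ, sin θ))`.
-/

/-- Parallel-beam ray transform. -/
noncomputable def rayTransform (f : ℝ × ℝ → ℝ) (θ s : ℝ) : ℝ :=
  ∫ t : ℝ, f (s * Real.cos θ - t * Real.sin θ, s * Real.sin θ + t * Real.cos θ)

noncomputable def planeRotation (θ : ℝ) : (ℝ × ℝ) ≃ᵐ (ℝ × ℝ) :=
  Complex.measurableEquivRealProd.symm.trans
    ((rotation (Circle.exp θ)).toHomeomorph.toMeasurableEquiv.trans
      Complex.measurableEquivRealProd)

theorem measurePreserving_planeRotation (θ : ℝ) : MeasurePreserving (planeRotation θ) :=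
  Complex.volume_preserving_equiv_real_prod.comp
    ((rotation _).measurePreserving.comp Complex.volume_preserving_equiv_real_prod.symm)

theorem planeRotation_apply (θ : ℝ) (p : ℝ × ℝ) :
    planeRotation θ p =
      (p.1 * Real.cos θ - p.2 * Real.sin θ, p.1 * Real.sin θ + p.2 * Real.cos θ) := by
  have hexp : (Circle.exp θ : ℂ) = Real.cos θ + Real.sin θ * I := by
    rw [Circle.coe_exp, Complex.exp_mul_I]
    push_cast
    ring
  simp only [planeRotation, MeasurableEquiv.trans_apply, Homeomorph.toMeasurableEquiv_coe,
    LinearIsometryEquiv.coe_toHomeomorph, rotation_apply, hexp]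
  ext <;> simp [Complex.measurableEquivRealProd, Complex.cos_ofReal_re, Complex.sin_ofReal_re] <;>
    ring

theorem planeRotation_fst_mul_cos_add_snd_mul_sin (θ : ℝ) (p : ℝ × ℝ) :
    (planeRotation θ p).1 * Real.cos θ + (planeRotation θ p).2 * Real.sin θ = p.1 := by
  rw [planeRotation_apply]
  linear_combination p.1 * Real.cos_sq_add_sin_sq θ

theorem rayTransform_eq_integral_planeRotation (f : ℝ × ℝ → ℝ) (θ s : ℝ) :
    rayTransform f θ s = ∫ t : ℝ, f (planeRotation θ (s, t)) := by
  simp only [rayTransform, planeRotation_apply]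

theorem integral_integral_mul_of_norm_le {α β : Type*} [MeasurableSpace α] [MeasurableSpace β]
    {μ : Measure α} {ν : Measure β} [SFinite μ] [SFinite ν] {g : α × β → ℂ}
    (hg : Integrable g (μ.prod ν)) {e : α → ℂ} (he : AEStronglyMeasurable e μ) {C : ℝ}
    (heC : ∀ a, ‖e a‖ ≤ C) :
    ∫ a, (∫ b, g (a, b) ∂ν) * e a ∂μ = ∫ p, g p * e p.1 ∂(μ.prod ν) := by
  have hge : Integrable (fun p => g p * e p.1) (μ.prod ν) := by
    simpa only [mul_comm] using
      hg.bdd_mul he.comp_fst (Filter.Eventually.of_forall fun p => heC p.1)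
  simp_rw [← integral_mul_const]
  exact integral_integral (f := fun a b => g (a, b) * e a) hge

theorem projection_slice_general
    (f : ℝ × ℝ → ℝ) (hf : Integrable f) (θ σ : ℝ) :
    (∫ s : ℝ, (rayTransform f θ s : ℂ) * Complex.exp (-2 * Real.pi * Complex.I * σ * s))
      = ∫ x : ℝ × ℝ, (f x : ℂ) *
          Complex.exp (-2 * Real.pi * Complex.I *
            (x.1 * (σ * Real.cos θ) + x.2 * (σ * Real.sin θ))) := by
  set R := planeRotation θ
  have hR : MeasurePreserving R := measurePreserving_planeRotation θ
  have hfR : Integrable (fun p => (f (R p) : ℂ)) :=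
    ((hR.integrable_comp_emb R.measurableEmbedding).mpr hf).ofReal
  have hphase : ∀ p : ℝ × ℝ, -2 * π * I * σ * p.1 =
      -2 * π * I * ((R p).1 * (σ * Real.cos θ) + (R p).2 * (σ * Real.sin θ)) := fun p => by
    rw [← planeRotation_fst_mul_cos_add_snd_mul_sin θ p]
    push_cast
    ring
  calc (∫ s : ℝ, (rayTransform f θ s : ℂ) * cexp (-2 * π * I * σ * s))
      = ∫ s : ℝ, (∫ t : ℝ, (f (R (s, t)) : ℂ)) * cexp (-2 * π * I * σ * s) := by
        simp only [R, rayTransform_eq_integral_planeRotation, integral_complex_ofReal]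
    _ = ∫ p : ℝ × ℝ, (f (R p) : ℂ) * cexp (-2 * π * I * σ * p.1) := by
        rw [Measure.volume_eq_prod] at hfR ⊢
        refine integral_integral_mul_of_norm_le hfR (by fun_prop : Continuous fun s : ℝ =>
          cexp (-2 * π * I * σ * s)).aestronglyMeasurable (C := 1) fun s => ?_
        rw [show -2 * π * I * σ * s = ((-2 * π * σ * s : ℝ) : ℂ) * I by push_cast; ring,
          norm_exp_ofReal_mul_I]
    _ = ∫ p : ℝ × ℝ, (f (R p) : ℂ) *
          cexp (-2 * π * I * ((R p).1 * (σ * Real.cos θ) + (R p).2 * (σ * Real.sin θ))) := by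
        simp_rw [hphase]
    _ = _ := hR.integral_comp R.measurableEmbedding (fun x => (f x : ℂ) *
          cexp (-2 * π * I * (x.1 * (σ * Real.cos θ) + x.2 * (σ * Real.sin θ))))

/-- Projection slice theorem: the 1D Fourier transform of `s ↦ P(f)(θ, s)` at frequency `σ`
equals the 2D Fourier transform of `f` at `σ · (cos θ, sin θ)`. -/
theorem projection_slice
    (f : ℝ × ℝ → ℝ) (hf : Integrable f) (hfs : HasCompactSupport f) (θ σ : ℝ) :
    (∫ s : ℝ, (rayTransform f θ s : ℂ) * Complex.exp (-2 * Real.pi * Complex.I * σ * s))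
      = ∫ x : ℝ × ℝ, (f x : ℂ) *
          Complex.exp (-2 * Real.pi * Complex.I *
            (x.1 * (σ * Real.cos θ) + x.2 * (σ * Real.sin θ))) :=
  projection_slice_general f hf θ σ
end

section
/- (Moment condition, necessity) For f : ℝ² → ℝ integrable with compact support and n ∈ ℕ, the function θ ↦ ∫_{-∞}^{∞} P(f)(θ, s) s^n ds is a trigonometric polynomial of degree at most n; more precisely it lies in the span of {e^{ikθ} : |k| ≤ n, k + n even}. -/
/-!
Fubini and the rotation invariance of Lebesgue measure turn the `n`-th moment into
`∫ f(p) ⟨p, ω_θ⟩ⁿ dp` with `ω_θ = (cos θ, sin θ)`. With `z = p₁ + i p₂` one has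
`⟨p, ω_θ⟩ = (z e^{-iθ} + z̄ e^{iθ}) / 2`, so the binomial theorem writes the moment as a
combination of the `e^{i(m₂ - m₁)θ}` with `m₁ + m₂ = n`, i.e. of the `e^{ikθ}` with `|k| ≤ n`
and `k ≡ n (mod 2)`.
-/

open MeasureTheory Real Complex

open Finset

theorem MeasureTheory.Integrable.smul_continuous_of_hasCompactSupport {X 𝕜 E : Type*}
    [TopologicalSpace X] [T2Space X] [MeasurableSpace X] [OpensMeasurableSpace X] {μ : Measure X}
    [NormedRing 𝕜] [NormedAddCommGroup E] [Module 𝕜 E] [IsBoundedSMul 𝕜 E]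
    [SecondCountableTopologyEither X E] {f : X → 𝕜} {g : X → E}
    (hf : Integrable f μ) (hfs : HasCompactSupport f) (hg : Continuous g) :
    Integrable (fun x => f x • g x) μ :=
  (integrableOn_iff_integrable_of_support_subset
    ((Function.support_smul_subset_left f g).trans (subset_tsupport f))).mp
    (hf.integrableOn.smul_continuousOn hg.continuousOn hfs)

theorem exists_sum_Icc_eq_sum_antidiagonal {R : Type*} [Semiring R] (n : ℕ) (a : ℕ × ℕ → R) :
    ∃ c : ℤ → R, (∀ k : ℤ, ¬(|k| ≤ (n : ℤ) ∧ Even (k + n)) → c k = 0) ∧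
      ∀ g : ℤ → R, ∑ m ∈ antidiagonal n, a m * g (m.2 - m.1)
        = ∑ k ∈ Icc (-(n : ℤ)) n, c k * g k := by
  classical
  refine ⟨fun k => ∑ m ∈ (antidiagonal n).filter (fun m => (m.2 : ℤ) - m.1 = k), a m,
    fun k hk => sum_eq_zero fun m hm => ?_, fun g => ?_⟩
  · rw [mem_filter, HasAntidiagonal.mem_antidiagonal] at hm
    exact absurd ⟨abs_le.mpr ⟨by omega, by omega⟩, ⟨m.2, by omega⟩⟩ hk
  · have hmaps : ∀ m ∈ antidiagonal n, (m.2 : ℤ) - m.1 ∈ Icc (-(n : ℤ)) n := fun m hm => by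
      rw [HasAntidiagonal.mem_antidiagonal] at hm
      rw [mem_Icc]
      omega
    rw [← sum_fiberwise_of_maps_to hmaps]
    refine sum_congr rfl fun k _ => ?_
    rw [sum_mul]
    exact sum_congr rfl fun m hm => by rw [(mem_filter.mp hm).2]

noncomputable def rotEquiv (θ : ℝ) : (ℝ × ℝ) ≃ᵐ (ℝ × ℝ) :=
  Complex.measurableEquivRealProd.symm.trans
    (((rotation (Circle.exp θ)).toHomeomorph.toMeasurableEquiv).trans
      Complex.measurableEquivRealProd)

theorem rotEquiv_apply (θ : ℝ) (p : ℝ × ℝ) :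
    rotEquiv θ p = (p.1 * Real.cos θ - p.2 * Real.sin θ, p.1 * Real.sin θ + p.2 * Real.cos θ) := by
  simp only [rotEquiv, MeasurableEquiv.trans_apply, measurableEquivRealProd_symm_apply,
    Homeomorph.toMeasurableEquiv_coe, LinearIsometryEquiv.coe_toHomeomorph, rotation_apply,
    Circle.coe_exp, exp_mul_I, ← ofReal_cos, ← ofReal_sin, measurableEquivRealProd_apply, mul_re,
    add_re, ofReal_re, I_re, mul_zero, ofReal_im, I_im, mul_one, sub_self, add_zero, add_im, mul_im,
    zero_add, Prod.mk.injEq]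
  constructor <;> ring

theorem measurePreserving_rotEquiv (θ : ℝ) : MeasurePreserving (rotEquiv θ) := by
  have h := Complex.volume_preserving_equiv_real_prod
  exact h.comp ((rotation (Circle.exp θ)).measurePreserving.comp (h.symm _))

theorem integral_rayTransform_mul (f : ℝ × ℝ → ℝ) (g : ℝ → ℝ) (θ : ℝ)
    (hfg : Integrable fun p : ℝ × ℝ => f p * g (p.1 * Real.cos θ + p.2 * Real.sin θ)) :
    ∫ s, rayTransform f θ s * g s = ∫ p : ℝ × ℝ, f p * g (p.1 * Real.cos θ + p.2 * Real.sin θ) := by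
  set H : ℝ × ℝ → ℝ := fun p => f p * g (p.1 * Real.cos θ + p.2 * Real.sin θ)
  have hR := measurePreserving_rotEquiv θ
  have hHR : ∀ q : ℝ × ℝ, H (rotEquiv θ q) = f (rotEquiv θ q) * g q.1 := fun q => by
    have : (rotEquiv θ q).1 * Real.cos θ + (rotEquiv θ q).2 * Real.sin θ = q.1 := by
      rw [rotEquiv_apply]
      linear_combination q.1 * Real.cos_sq_add_sin_sq θ
    simp only [H, this]
  have hint : Integrable (H ∘ rotEquiv θ) :=
    (hR.integrable_comp_emb (rotEquiv θ).measurableEmbedding).mpr hfg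
  simp only [Function.comp_def, hHR, Measure.volume_eq_prod] at hint
  calc ∫ s, rayTransform f θ s * g s
      = ∫ s, ∫ t, f (rotEquiv θ (s, t)) * g s := by
        simp only [rayTransform, rotEquiv_apply, integral_mul_const]
    _ = ∫ q : ℝ × ℝ, H (rotEquiv θ q) := by
        simp only [hHR, Measure.volume_eq_prod]
        exact (integral_prod _ hint).symm
    _ = ∫ p : ℝ × ℝ, H p := hR.integral_comp (rotEquiv θ).measurableEmbedding H

theorem ofReal_mul_cos_add_mul_sin (x y θ : ℝ) :
    ((x * Real.cos θ + y * Real.sin θ : ℝ) : ℂ)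
      = ((x + I * y) * exp (-(I * θ)) + (x - I * y) * exp (I * θ)) / 2 := by
  push_cast
  rw [Complex.cos, Complex.sin]
  ring_nf

theorem ofReal_mul_cos_add_mul_sin_pow (x y θ : ℝ) (n : ℕ) :
    ((x * Real.cos θ + y * Real.sin θ : ℝ) : ℂ) ^ n
      = ∑ m ∈ antidiagonal n, (n.choose m.1 / 2 ^ n * exp (I * ((m.2 - m.1 : ℤ) : ℂ) * θ))
          * ((x + I * y) ^ m.1 * (x - I * y) ^ m.2) := by
  rw [ofReal_mul_cos_add_mul_sin, div_pow, (Commute.all _ _).add_pow', sum_div]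
  refine sum_congr rfl fun m _ => ?_
  have hexp : exp (I * ((m.2 - m.1 : ℤ) : ℂ) * θ) = exp (-(I * θ)) ^ m.1 * exp (I * θ) ^ m.2 := by
    rw [← Complex.exp_nat_mul, ← Complex.exp_nat_mul, ← Complex.exp_add]
    push_cast
    ring_nf
  rw [hexp, nsmul_eq_mul, mul_pow, mul_pow]
  ring

theorem integral_rayTransform_mul_pow (f : ℝ × ℝ → ℝ) (hf : Integrable f)
    (hfs : HasCompactSupport f) (n : ℕ) (θ : ℝ) :
    ∫ s, rayTransform f θ s * s ^ n
      = ∫ p : ℝ × ℝ, f p * (p.1 * Real.cos θ + p.2 * Real.sin θ) ^ n :=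
  integral_rayTransform_mul f (· ^ n) θ (hf.smul_continuous_of_hasCompactSupport hfs (by fun_prop))

noncomputable def rayMomentCoeff (f : ℝ × ℝ → ℝ) (n : ℕ) (m : ℕ × ℕ) : ℂ :=
  n.choose m.1 / 2 ^ n * ∫ p : ℝ × ℝ, f p • ((p.1 + I * p.2) ^ m.1 * (p.1 - I * p.2) ^ m.2)

theorem ofReal_integral_rayTransform_mul_pow (f : ℝ × ℝ → ℝ) (hf : Integrable f)
    (hfs : HasCompactSupport f) (n : ℕ) (θ : ℝ) :
    ((∫ s, rayTransform f θ s * s ^ n : ℝ) : ℂ)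
      = ∑ m ∈ antidiagonal n, rayMomentCoeff f n m * exp (I * ((m.2 - m.1 : ℤ) : ℂ) * θ) := by
  set A : ℕ × ℕ → ℂ := fun m => n.choose m.1 / 2 ^ n * exp (I * ((m.2 - m.1 : ℤ) : ℂ) * θ)
  set P : ℕ × ℕ → ℝ × ℝ → ℂ := fun m p => ((p.1 + I * p.2) ^ m.1 * (p.1 - I * p.2) ^ m.2)
  have hexpand : ∀ p : ℝ × ℝ, ((f p * (p.1 * Real.cos θ + p.2 * Real.sin θ) ^ n : ℝ) : ℂ)
      = ∑ m ∈ antidiagonal n, A m * (f p • P m p) := fun p => by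
    rw [ofReal_mul, ofReal_pow, ofReal_mul_cos_add_mul_sin_pow, mul_sum]
    refine sum_congr rfl fun m _ => ?_
    rw [real_smul]
    ring
  have hint : ∀ m, Integrable fun p => f p • P m p := fun m =>
    hf.smul_continuous_of_hasCompactSupport hfs (by fun_prop)
  rw [integral_rayTransform_mul_pow f hf hfs, ← integral_complex_ofReal,
    integral_congr_ae (.of_forall hexpand), integral_finsetSum _ fun m _ => (hint m).const_mul _]
  refine sum_congr rfl fun m _ => ?_
  rw [integral_const_mul, rayMomentCoeff]
  ring

/-- Moment condition (necessity): the n-th moment `θ ↦ ∫ P(f)(θ,s) sⁿ ds` lies in the span of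
`{e^{ikθ} : |k| ≤ n, k + n even}`. -/
theorem moment_condition
    (f : ℝ × ℝ → ℝ) (hf : Integrable f) (hfs : HasCompactSupport f) (n : ℕ) :
    ∃ c : ℤ → ℂ,
      (∀ k : ℤ, ¬(|k| ≤ (n : ℤ) ∧ Even (k + n)) → c k = 0) ∧
      ∀ θ : ℝ,
        ((∫ s : ℝ, rayTransform f θ s * s ^ n : ℝ) : ℂ)
          = ∑ k ∈ Finset.Icc (-(n : ℤ)) (n : ℤ),
              c k * Complex.exp (Complex.I * k * θ) := by
  obtain ⟨c, hc, hsum⟩ := exists_sum_Icc_eq_sum_antidiagonal n (rayMomentCoeff f n)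
  refine ⟨c, hc, fun θ => ?_⟩
  rw [← hsum fun k => exp (I * k * θ)]
  exact ofReal_integral_rayTransform_mul_pow f hf hfs n θ
end

section
/- The first moment of the ray transform satisfies ∫_{-∞}^{∞} P(f)(θ, s) s ds = cos θ · ∫_{ℝ²} x f(x, y) dx dy + sin θ · ∫_{ℝ²} y f(x, y) dx dy, i.e., it lies in span{cos θ, sin θ}. -/
open MeasureTheory Real

noncomputable def rotL (θ : ℝ) : (ℝ × ℝ) ≃ₗ[ℝ] (ℝ × ℝ) where
  toFun p := (p.1 * Real.cos θ - p.2 * Real.sin θ, p.1 * Real.sin θ + p.2 * Real.cos θ)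
  invFun p := (p.1 * Real.cos θ + p.2 * Real.sin θ, -p.1 * Real.sin θ + p.2 * Real.cos θ)
  map_add' a b := by simp only [Prod.fst_add, Prod.snd_add, Prod.mk_add_mk, Prod.mk.injEq]
                     constructor <;> ring
  map_smul' c p := by simp only [Prod.smul_fst, Prod.smul_snd, Prod.smul_mk, smul_eq_mul,
    RingHom.id_apply, Prod.mk.injEq]; constructor <;> ring
  left_inv p := by
    obtain ⟨x, y⟩ := p
    have h := sin_sq_add_cos_sq θ
    simp only [Prod.mk.injEq]
    constructor <;> [linear_combination x * h; linear_combination y * h]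
  right_inv p := by
    obtain ⟨x, y⟩ := p
    have h := sin_sq_add_cos_sq θ
    simp only [Prod.mk.injEq]
    constructor <;> [linear_combination x * h; linear_combination y * h]

theorem rotL_det (θ : ℝ) : LinearMap.det ((rotL θ).toLinearMap) = 1 := by
  have h := sin_sq_add_cos_sq θ
  rw [← LinearMap.det_toMatrix (Module.Basis.finTwoProd ℝ), Matrix.det_fin_two]
  simp [LinearMap.toMatrix_apply, Module.Basis.finTwoProd_zero, Module.Basis.finTwoProd_one,
    Module.Basis.coe_finTwoProd_repr, rotL]
  linear_combination h

theorem rotL_measurePreserving (θ : ℝ) :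
    MeasurePreserving (rotL θ) (volume : Measure (ℝ × ℝ)) volume := by
  constructor
  · exact ((rotL θ).toLinearMap.continuous_of_finiteDimensional).measurable
  · have : ⇑(rotL θ) = ⇑(rotL θ).toLinearMap := rfl
    rw [this, Measure.map_linearMap_addHaar_eq_smul_addHaar _ (by rw [rotL_det]; norm_num),
      rotL_det]
    simp


/-- The first moment of the ray transform lies in `span{cos θ, sin θ}`. -/
theorem first_moment
    (f : ℝ × ℝ → ℝ) (hf : Integrable f) (hfs : HasCompactSupport f)
    (hm1 : Integrable (fun x : ℝ × ℝ => x.1 * f x))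
    (hm2 : Integrable (fun x : ℝ × ℝ => x.2 * f x)) :
    ∀ θ : ℝ,
      (∫ s : ℝ, rayTransform f θ s * s)
        = Real.cos θ * (∫ x : ℝ × ℝ, x.1 * f x)
          + Real.sin θ * (∫ x : ℝ × ℝ, x.2 * f x) := by
  intro θ
  have hL := rotL_measurePreserving θ
  have hemb : MeasurableEmbedding (rotL θ) :=
    ((rotL θ).toContinuousLinearEquiv.toHomeomorph).measurableEmbedding
  set F : ℝ × ℝ → ℝ := fun p => (p.1 * Real.cos θ + p.2 * Real.sin θ) * f p with hFdef
  have hFsplit : F = fun p => Real.cos θ * (p.1 * f p) + Real.sin θ * (p.2 * f p) := by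
    funext p; simp only [hFdef]; ring
  have hF : Integrable F := by
    rw [hFsplit]; exact (hm1.const_mul _).add (hm2.const_mul _)
  have key : ∀ p : ℝ × ℝ, F (rotL θ p) = p.1 * f (rotL θ p) := by
    intro p
    have h : (rotL θ p).1 * Real.cos θ + (rotL θ p).2 * Real.sin θ = p.1 := by
      show (p.1 * Real.cos θ - p.2 * Real.sin θ) * Real.cos θ +
        (p.1 * Real.sin θ + p.2 * Real.cos θ) * Real.sin θ = p.1
      linear_combination p.1 * sin_sq_add_cos_sq θ
    simp only [hFdef, h]
  have hG : Integrable (fun p : ℝ × ℝ => p.1 * f (rotL θ p)) := by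
    have := hL.integrable_comp_emb hemb |>.mpr hF
    simpa only [Function.comp_def, key] using this
  have h1 : ∫ p : ℝ × ℝ, p.1 * f (rotL θ p) = ∫ p : ℝ × ℝ, F p := by
    rw [← funext key]
    exact hL.integral_comp hemb F
  have h2 : ∫ p : ℝ × ℝ, F p
      = Real.cos θ * (∫ x : ℝ × ℝ, x.1 * f x) + Real.sin θ * (∫ x : ℝ × ℝ, x.2 * f x) := by
    rw [hFsplit, integral_add (hm1.const_mul _) (hm2.const_mul _),
      integral_const_mul, integral_const_mul]
  have h3 : ∫ p : ℝ × ℝ, p.1 * f (rotL θ p)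
      = ∫ s : ℝ, ∫ t : ℝ, (s * f (rotL θ (s, t))) := by
    rw [Measure.volume_eq_prod] at hG ⊢
    exact integral_prod _ hG
  have h4 : ∀ s : ℝ, ∫ t : ℝ, s * f (rotL θ (s, t)) = rayTransform f θ s * s := by
    intro s
    rw [integral_const_mul, mul_comm]
    rfl
  rw [← h2, ← h1, h3]
  simp only [h4]
end
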